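/- Let d, N ∈ ℕ, let φ : ℝ → ℝ be differentiable and non-decreasing with φ′(s) ≥ c₀ > 0 for all s, and let u : [0,T] × (ℤ/Nℤ)^d → ℝ be a C¹ (in time) solution of ∂_t u(t,x) = Δ^N φ(u(t,x)) − K u(t,x) v(t,x), where Δ^N is the discrete Laplacian, K ≥ 0 and v(t,x) ≥ 0. If u(t,x) ≥ 0 for all t,x, then (1/2)·(d/dt) ∑_x u(t,x)² ≤ −c₀ ∑_x |∇^N u(t,x)|², where ∇^N is the discrete gradient. -/

import Mathlib

/-!
Differentiating the energy gives `∑ₓ u (Δ φ(u) − K u v)`. The reaction part contributes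
`−K ∑ₓ u² v ≤ 0` and is dropped. Summation by parts turns `∑ₓ u Δ φ(u)` into
`−∑ₓ ∇u · ∇φ(u)`, and each term `(a − b)(φ a − φ b)` is at least `c₀ (a − b)²` because
`φ − c₀ id` is monotone.
-/

open Finset

theorem mul_sub_sq_le_of_le_deriv {φ φ' : ℝ → ℝ} {c₀ : ℝ} (hφ : ∀ s, HasDerivAt φ (φ' s) s)
    (hφ' : ∀ s, c₀ ≤ φ' s) (a b : ℝ) :
    c₀ * (a - b) ^ 2 ≤ (a - b) * (φ a - φ b) := by
  have hmono : Monotone fun s => φ s - c₀ * s :=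
    monotone_of_hasDerivAt_nonneg
      (fun s => (hφ s).sub ((hasDerivAt_id s).const_mul c₀ |>.congr_deriv (mul_one c₀)))
      (fun s => sub_nonneg.mpr (hφ' s))
  rcases le_total a b with h | h
  · nlinarith [hmono h]
  · nlinarith [hmono h]

section Torus

variable {G ι : Type*} [AddCommGroup G] [Fintype G] [Fintype ι]

def discreteLaplacian (N : ℝ) (e : ι → G) (w : G → ℝ) (x : G) : ℝ :=
  N ^ 2 * ∑ j, (w (x + e j) + w (x - e j) - 2 * w x)

def discreteGrad (N : ℝ) (e : ι → G) (w : G → ℝ) (x : G) (j : ι) : ℝ :=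
  N * (w (x + e j) - w x)

theorem sum_mul_second_difference {R : Type*} [CommRing R] (u w : G → R) (e : G) :
    ∑ x, u x * (w (x + e) + w (x - e) - 2 * w x) =
      -∑ x, (u (x + e) - u x) * (w (x + e) - w x) := by
  have h_back : ∑ x, u x * w (x - e) = ∑ x, u (x + e) * w x :=
    (Fintype.sum_equiv (Equiv.addRight e) _ _ fun x => by simp).symm
  have h_shift : ∑ x, u (x + e) * w (x + e) = ∑ x, u x * w x :=
    Fintype.sum_equiv (Equiv.addRight e) _ _ fun _ => rfl
  have h_pointwise : ∀ x, u x * (w (x + e) + w (x - e) - 2 * w x) =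
      -((u (x + e) - u x) * (w (x + e) - w x)) +
        (u x * w (x - e) - u (x + e) * w x) + (u (x + e) * w (x + e) - u x * w x) :=
    fun x => by ring
  simp only [h_pointwise, sum_add_distrib, sum_sub_distrib, sum_neg_distrib, h_back, h_shift]
  ring

theorem sum_mul_discreteLaplacian (N : ℝ) (e : ι → G) (u w : G → ℝ) :
    ∑ x, u x * discreteLaplacian N e w x =
      -∑ x, ∑ j, discreteGrad N e u x j * discreteGrad N e w x j := by
  calc ∑ x, u x * discreteLaplacian N e w x
      = N ^ 2 * ∑ j, ∑ x, u x * (w (x + e j) + w (x - e j) - 2 * w x) := by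
        simp only [discreteLaplacian, mul_sum, mul_left_comm (u _)]
        exact sum_comm
    _ = -∑ x, ∑ j, discreteGrad N e u x j * discreteGrad N e w x j := by
        simp only [sum_mul_second_difference, discreteGrad, mul_mul_mul_comm _ (u _ - u _), ← sq,
          mul_neg, mul_sum, sum_neg_distrib]
        rw [sum_comm]

theorem sum_mul_discreteLaplacian_comp_le {φ φ' : ℝ → ℝ} {c₀ : ℝ}
    (hφ : ∀ s, HasDerivAt φ (φ' s) s) (hφ' : ∀ s, c₀ ≤ φ' s) (N : ℝ) (e : ι → G) (u : G → ℝ) :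
    ∑ x, u x * discreteLaplacian N e (φ ∘ u) x ≤ -c₀ * ∑ x, ∑ j, discreteGrad N e u x j ^ 2 := by
  rw [sum_mul_discreteLaplacian, neg_mul, neg_le_neg_iff, mul_sum]
  refine sum_le_sum fun x _ => ?_
  rw [mul_sum]
  refine sum_le_sum fun j _ => ?_
  simp only [discreteGrad, Function.comp_apply]
  have := mul_le_mul_of_nonneg_left (mul_sub_sq_le_of_le_deriv hφ hφ' (u (x + e j)) (u x))
    (sq_nonneg N)
  linarith

end Torus

theorem hasDerivAt_half_sum_sq {α : Type*} [Fintype α] {u : ℝ → α → ℝ} {u' : α → ℝ} {t : ℝ}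
    (hu : ∀ x, HasDerivAt (fun s => u s x) (u' x) t) :
    HasDerivAt (fun s => (1 / 2 : ℝ) * ∑ x, u s x ^ 2) (∑ x, u t x * u' x) t := by
  refine ((HasDerivAt.fun_sum fun x _ => (hu x).pow 2).const_mul (1 / 2 : ℝ)).congr_deriv ?_
  rw [mul_sum]
  exact sum_congr rfl fun x _ => by push_cast; ring

theorem stmt6_general (d N : ℕ) [NeZero N] (φ φ' : ℝ → ℝ) (c₀ K : ℝ)
    (hK : 0 ≤ K)
    (hφ : ∀ s, HasDerivAt φ (φ' s) s) (hφ' : ∀ s, c₀ ≤ φ' s)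
    (u v : ℝ → (Fin d → ZMod N) → ℝ)
    (hv0 : ∀ t x, 0 ≤ v t x)
    (hu : ∀ t x, HasDerivAt (fun s => u s x)
      ((N : ℝ) ^ 2 * ∑ j : Fin d,
          (φ (u t (x + Pi.single j 1)) + φ (u t (x - Pi.single j 1)) - 2 * φ (u t x))
        - K * u t x * v t x) t)
    (t : ℝ) (y : ℝ)
    (hy : HasDerivAt (fun s => (1 / 2 : ℝ) * ∑ x : Fin d → ZMod N, (u s x) ^ 2) y t) :
    y ≤ -c₀ * ∑ x : Fin d → ZMod N, ∑ j : Fin d,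
        ((N : ℝ) * (u t (x + Pi.single j 1) - u t x)) ^ 2 := by
  set e : Fin d → Fin d → ZMod N := fun j => Pi.single j 1
  calc y = ∑ x, u t x * (discreteLaplacian N e (φ ∘ u t) x - K * u t x * v t x) :=
        hy.unique (hasDerivAt_half_sum_sq (hu t))
    _ ≤ ∑ x, u t x * discreteLaplacian N e (φ ∘ u t) x := by
        refine sum_le_sum fun x _ => ?_
        have h_reaction : 0 ≤ K * u t x ^ 2 * v t x := by have := hv0 t x; positivity
        linarith
    _ ≤ -c₀ * ∑ x, ∑ j, discreteGrad N e (u t) x j ^ 2 :=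
        sum_mul_discreteLaplacian_comp_le hφ hφ' _ e (u t)

/-- Energy dissipation for the semi-discrete reaction-diffusion equation: if
`∂_t u = Δ^N φ(u) − K u v` with `φ' ≥ c₀ > 0`, `K ≥ 0`, `u, v ≥ 0`, then
`(1/2) d/dt ∑_x u(t,x)² ≤ −c₀ ∑_x |∇^N u(t,x)|²`. -/
theorem stmt6 (d N : ℕ) [NeZero N] (T : ℝ) (φ φ' : ℝ → ℝ) (c₀ K : ℝ)
    (hc₀ : 0 < c₀) (hK : 0 ≤ K)
    (hφ : ∀ s, HasDerivAt φ (φ' s) s) (hφ' : ∀ s, c₀ ≤ φ' s)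
    (u v : ℝ → (Fin d → ZMod N) → ℝ)
    (hu0 : ∀ t x, 0 ≤ u t x) (hv0 : ∀ t x, 0 ≤ v t x)
    (hu : ∀ t x, HasDerivAt (fun s => u s x)
      ((N : ℝ) ^ 2 * ∑ j : Fin d,
          (φ (u t (x + Pi.single j 1)) + φ (u t (x - Pi.single j 1)) - 2 * φ (u t x))
        - K * u t x * v t x) t)
    (t : ℝ) (ht : t ∈ Set.Icc 0 T) (y : ℝ)
    (hy : HasDerivAt (fun s => (1 / 2 : ℝ) * ∑ x : Fin d → ZMod N, (u s x) ^ 2) y t) :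
    y ≤ -c₀ * ∑ x : Fin d → ZMod N, ∑ j : Fin d,
        ((N : ℝ) * (u t (x + Pi.single j 1) - u t x)) ^ 2 :=
  stmt6_general d N φ φ' c₀ K hK hφ hφ' u v hv0 hu t y hy
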